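/- Correctness of cleverness (Theorem 2): Let S = (P, Act, →) be a finite labeled transition system, p0 ∈ P, Q0 ⊆ P, and e ∈ En_∞ an extended energy such that e_4 ∈ {0, 1, ∞}, e_4 ≤ e_3, and e_5 > 1 implies e_3 = e_4. Then the attacker wins the clever spectroscopy game G▲ from [p0,Q0]_a with initial budget e if and only if the attacker wins the spectroscopy energy game G△ from [p0,Q0]_a with initial budget e. -/

import Mathlib

/-! ### Energies and energy updates -/

/-- (Finite) energies: vectors in `ℕ^N`. -/
abbrev Energy (N : ℕ) := Fin N → ℕ

/-- Extended energies: vectors in `(ℕ ∪ {∞})^N`. -/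
abbrev EnergyE (N : ℕ) := Fin N → ℕ∞

/-- Embedding of energies into extended energies. -/
def Energy.toE {N : ℕ} (e : Energy N) : EnergyE N := fun k => (e k : ℕ∞)

/-- A component of an energy update: `-1`, `0`, or `min_D`. -/
inductive UpdComp (N : ℕ) : Type where
  | dec : UpdComp N
  | zero : UpdComp N
  | minOf (D : Finset (Fin N)) : UpdComp N
deriving DecidableEq

/-- An energy update: a vector of update components, where a `min_D`
component at index `k` must satisfy `k ∈ D`. -/
structure EnergyUpdate (N : ℕ) : Type where
  comp : Fin N → UpdComp N
  valid : ∀ k D, comp k = UpdComp.minOf D → k ∈ D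

open Classical in
/-- Applying an energy update to an extended energy: component `k` becomes
`e k - 1`, `e k`, or `min_{d ∈ D} e d`; the result is undefined (`none`) if
some component would become negative. -/
noncomputable def applyUpdE {N : ℕ} (e : EnergyE N) (u : EnergyUpdate N) :
    Option (EnergyE N) :=
  if ∀ k, u.comp k = UpdComp.dec → e k ≠ 0 then
    some (fun k =>
      match u.comp k with
      | UpdComp.dec => e k - 1
      | UpdComp.zero => e k
      | UpdComp.minOf D => (insert k D).inf' (Finset.insert_nonempty k D) e)
  else none

open Classical in
/-- Applying an energy update to a (finite) energy. -/
noncomputable def applyUpdN {N : ℕ} (e : Energy N) (u : EnergyUpdate N) :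
    Option (Energy N) :=
  if ∀ k, u.comp k = UpdComp.dec → e k ≠ 0 then
    some (fun k =>
      match u.comp k with
      | UpdComp.dec => e k - 1
      | UpdComp.zero => e k
      | UpdComp.minOf D => (insert k D).inf' (Finset.insert_nonempty k D) e)
  else none

/-! ### Declining energy games -/

/-- A declining `N`-dimensional energy game: positions (partitioned into defender
positions and attacker positions), moves, and a weight function assigning an
energy update to each move. -/
structure EnergyGame (N : ℕ) where
  Pos : Type
  defender : Pos → Prop
  move : Pos → Pos → Prop
  weight : Pos → Pos → EnergyUpdate N

/-- The attacker wins from position `g` with (extended) initial energy budget `e`: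
inductive (attractor) characterization of the existence of an attacker winning
strategy.  (The attacker wins exactly the finite plays that get stuck at a defender
position without the energy having become negative, so the attacker has a winning
strategy iff they can force the play into a stuck defender position in finitely
many steps while keeping all energy levels defined.) -/
inductive AttackerWins {N : ℕ} (G : EnergyGame N) : G.Pos → EnergyE N → Prop where
  | attack {g g' : G.Pos} {e e' : EnergyE N} :
      ¬ G.defender g → G.move g g' →
      applyUpdE e (G.weight g g') = some e' →
      AttackerWins G g' e' → AttackerWins G g e
  | defend {g : G.Pos} {e : EnergyE N} :
      G.defender g →
      (∀ g', G.move g g' → (applyUpdE e (G.weight g g')).isSome) →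
      (∀ g' e', G.move g g' → applyUpdE e (G.weight g g') = some e' →
        AttackerWins G g' e') →
      AttackerWins G g e
/-! ### The spectroscopy energy game -/

/-- Lifting of transition steps to sets of processes:
`stepSet step Q a = {q' | ∃ q ∈ Q, q →a q'}`. -/
def stepSet {P : Type} {Act : Type} (step : P → Act → P → Prop) (Q : Set P) (a : Act) :
    Set P := {q' | ∃ q ∈ Q, step q a q'}

/-- The actions enabled initially for a process `p`: `I(p)`. -/
def enabledActs {P : Type} {Act : Type} (step : P → Act → P → Prop) (p : P) : Set Act :=
  {a | ∃ p', step p a p'}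

/-- Positions of the spectroscopy energy game: attacker positions `[p,Q]_a`,
attacker clause positions `[p,q]_a^∧`, and defender positions `(p,Q,Q*)_d`. -/
inductive SpecPos (P : Type) : Type where
  | att (p : P) (Q : Set P)
  | attConj (p q : P)
  | defp (p : P) (Q Qs : Set P)

/-- Update `(-1,0,0,0,0,0)` of observation moves. -/
def uObs : EnergyUpdate 6 :=
  ⟨![.dec, .zero, .zero, .zero, .zero, .zero], by decide⟩

/-- Update `(0,-1,0,0,0,0)` of conjunction challenges. -/
def uConj : EnergyUpdate 6 :=
  ⟨![.zero, .dec, .zero, .zero, .zero, .zero], by decide⟩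

/-- Update `(min_{1,3},0,0,0,0,0)` of conjunction revivals. -/
def uRevival : EnergyUpdate 6 :=
  ⟨![.minOf {0, 2}, .zero, .zero, .zero, .zero, .zero], by decide⟩

/-- Update `(0,0,0,min_{3,4},0,0)` of conjunction answers. -/
def uAnswer : EnergyUpdate 6 :=
  ⟨![.zero, .zero, .zero, .minOf {2, 3}, .zero, .zero], by decide⟩

/-- Update `(min_{1,4},0,0,0,0,0)` of positive decisions. -/
def uPos : EnergyUpdate 6 :=
  ⟨![.minOf {0, 3}, .zero, .zero, .zero, .zero, .zero], by decide⟩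

/-- Update `(min_{1,5},0,0,0,0,-1)` of negative decisions. -/
def uNeg : EnergyUpdate 6 :=
  ⟨![.minOf {0, 4}, .zero, .zero, .zero, .zero, .dec], by decide⟩

/-- The moves of the spectroscopy energy game `G△`. -/
inductive SpecMove {P : Type} {Act : Type} (step : P → Act → P → Prop) :
    SpecPos P → SpecPos P → Prop where
  | obs {p p' : P} {Q : Set P} {a : Act} :
      step p a p' →
      SpecMove step (.att p Q) (.att p' (stepSet step Q a))
  | conjChallenge {p : P} {Q Qs : Set P} :
      Qs ⊆ Q →
      SpecMove step (.att p Q) (.defp p (Q \ Qs) Qs)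
  | conjRevival {p : P} {Q Qs : Set P} :
      Qs ≠ ∅ →
      SpecMove step (.defp p Q Qs) (.att p Qs)
  | conjAnswer {p q : P} {Q Qs : Set P} :
      q ∈ Q →
      SpecMove step (.defp p Q Qs) (.attConj p q)
  | posDecision {p q : P} :
      SpecMove step (.attConj p q) (.att p {q})
  | negDecision {p q : P} :
      p ≠ q →
      SpecMove step (.attConj p q) (.att q {p})

/-- The moves of the clever spectroscopy game `G▲`: like `SpecMove`, with conjunction
challenges restricted to the four subsets
`∅`, `{q ∈ Q | I(q) ⊆ I(p)}`, `{q ∈ Q | I(p) ⊆ I(q)}`, `{q ∈ Q | I(p) = I(q)}`. -/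
inductive CleverMove {P : Type} {Act : Type} (step : P → Act → P → Prop) :
    SpecPos P → SpecPos P → Prop where
  | obs {p p' : P} {Q : Set P} {a : Act} :
      step p a p' →
      CleverMove step (.att p Q) (.att p' (stepSet step Q a))
  | conjChallenge {p : P} {Q Qs : Set P} :
      (Qs = ∅ ∨
       Qs = {q ∈ Q | enabledActs step q ⊆ enabledActs step p} ∨
       Qs = {q ∈ Q | enabledActs step p ⊆ enabledActs step q} ∨
       Qs = {q ∈ Q | enabledActs step p = enabledActs step q}) →
      CleverMove step (.att p Q) (.defp p (Q \ Qs) Qs)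
  | conjRevival {p : P} {Q Qs : Set P} :
      Qs ≠ ∅ →
      CleverMove step (.defp p Q Qs) (.att p Qs)
  | conjAnswer {p q : P} {Q Qs : Set P} :
      q ∈ Q →
      CleverMove step (.defp p Q Qs) (.attConj p q)
  | posDecision {p q : P} :
      CleverMove step (.attConj p q) (.att p {q})
  | negDecision {p q : P} :
      p ≠ q →
      CleverMove step (.attConj p q) (.att q {p})

open Classical in
/-- The weight function of the spectroscopy energy game (well-defined on all moves). -/
noncomputable def specWeight {P : Type} : SpecPos P → SpecPos P → EnergyUpdate 6
  | .att _ _, .att _ _ => uObs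
  | .att _ _, .defp _ _ _ => uConj
  | .defp _ _ _, .att _ _ => uRevival
  | .defp _ _ _, .attConj _ _ => uAnswer
  | .attConj p _, .att p' _ => if p = p' then uPos else uNeg
  | _, _ => uObs

/-- The spectroscopy energy game `G△` of a labeled transition system. -/
noncomputable def specGame {P : Type} {Act : Type} (step : P → Act → P → Prop) :
    EnergyGame 6 where
  Pos := SpecPos P
  defender g := ∃ p Q Qs, g = SpecPos.defp p Q Qs
  move := SpecMove step
  weight := specWeight

/-- The clever spectroscopy energy game `G▲` of a labeled transition system. -/
noncomputable def cleverGame {P : Type} {Act : Type} (step : P → Act → P → Prop) :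
    EnergyGame 6 where
  Pos := SpecPos P
  defender g := ∃ p Q Qs, g = SpecPos.defp p Q Qs
  move := CleverMove step
  weight := specWeight

/-! ### Auxiliary development -/

namespace CleverAux

/-- Explicit results of the six updates. -/
def eObs (e : EnergyE 6) : EnergyE 6 := fun k => if k = 0 then e 0 - 1 else e k
def eConj (e : EnergyE 6) : EnergyE 6 := fun k => if k = 1 then e 1 - 1 else e k
noncomputable def eRev (e : EnergyE 6) : EnergyE 6 := fun k => if k = 0 then min (e 0) (e 2) else e k
noncomputable def eAns (e : EnergyE 6) : EnergyE 6 := fun k => if k = 3 then min (e 2) (e 3) else e k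
noncomputable def ePos (e : EnergyE 6) : EnergyE 6 := fun k => if k = 0 then min (e 0) (e 3) else e k
noncomputable def eNeg (e : EnergyE 6) : EnergyE 6 :=
  fun k => if k = 0 then min (e 0) (e 4) else if k = 5 then e 5 - 1 else e k

lemma inf_insert_mem (e : EnergyE 6) (k : Fin 6) (D : Finset (Fin 6)) (a b : Fin 6)
    (hm : ∀ c, c ∈ insert k D ↔ c = a ∨ c = b) :
    (insert k D).inf' (Finset.insert_nonempty k D) e = min (e a) (e b) := by
  apply le_antisymm
  · exact le_min (Finset.inf'_le _ ((hm a).mpr (Or.inl rfl)))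
      (Finset.inf'_le _ ((hm b).mpr (Or.inr rfl)))
  · apply Finset.le_inf'
    intro c hc
    rcases (hm c).mp hc with rfl | rfl
    · exact min_le_left _ _
    · exact min_le_right _ _

lemma upd_obs (e : EnergyE 6) (h : e 0 ≠ 0) : applyUpdE e uObs = some (eObs e) := by
  unfold applyUpdE
  rw [if_pos]
  · exact congrArg some (funext fun k => by fin_cases k <;> rfl)
  · intro k hk
    have hk0 : ∀ k : Fin 6, uObs.comp k = UpdComp.dec → k = 0 := by decide
    rw [hk0 k hk]; exact h

lemma upd_obs_inv {e e' : EnergyE 6} (h : applyUpdE e uObs = some e') :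
    e 0 ≠ 0 ∧ e' = eObs e := by
  by_cases h0 : e 0 = 0
  · exfalso
    unfold applyUpdE at h
    rw [if_neg] at h
    · exact absurd h (by simp)
    · intro hall; exact hall 0 (by decide) h0
  · rw [upd_obs e h0] at h
    exact ⟨h0, (Option.some_inj.mp h).symm⟩

lemma upd_conj (e : EnergyE 6) (h : e 1 ≠ 0) : applyUpdE e uConj = some (eConj e) := by
  unfold applyUpdE
  rw [if_pos]
  · exact congrArg some (funext fun k => by fin_cases k <;> rfl)
  · intro k hk
    have hk0 : ∀ k : Fin 6, uConj.comp k = UpdComp.dec → k = 1 := by decide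
    rw [hk0 k hk]; exact h

lemma upd_conj_inv {e e' : EnergyE 6} (h : applyUpdE e uConj = some e') :
    e 1 ≠ 0 ∧ e' = eConj e := by
  by_cases h0 : e 1 = 0
  · exfalso
    unfold applyUpdE at h
    rw [if_neg] at h
    · exact absurd h (by simp)
    · intro hall; exact hall 1 (by decide) h0
  · rw [upd_conj e h0] at h
    exact ⟨h0, (Option.some_inj.mp h).symm⟩

lemma upd_rev (e : EnergyE 6) : applyUpdE e uRevival = some (eRev e) := by
  unfold applyUpdE
  rw [if_pos]
  · refine congrArg some (funext fun k => ?_)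
    fin_cases k
    · exact inf_insert_mem e 0 {0, 2} 0 2 (by decide)
    · rfl
    · rfl
    · rfl
    · rfl
    · rfl
  · intro k hk
    exact absurd hk ((by decide : ∀ k : Fin 6, uRevival.comp k ≠ UpdComp.dec) k)

lemma upd_ans (e : EnergyE 6) : applyUpdE e uAnswer = some (eAns e) := by
  unfold applyUpdE
  rw [if_pos]
  · refine congrArg some (funext fun k => ?_)
    fin_cases k
    · rfl
    · rfl
    · rfl
    · exact inf_insert_mem e 3 {2, 3} 2 3 (by decide)
    · rfl
    · rfl
  · intro k hk
    exact absurd hk ((by decide : ∀ k : Fin 6, uAnswer.comp k ≠ UpdComp.dec) k)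

lemma upd_pos (e : EnergyE 6) : applyUpdE e uPos = some (ePos e) := by
  unfold applyUpdE
  rw [if_pos]
  · refine congrArg some (funext fun k => ?_)
    fin_cases k
    · exact inf_insert_mem e 0 {0, 3} 0 3 (by decide)
    · rfl
    · rfl
    · rfl
    · rfl
    · rfl
  · intro k hk
    exact absurd hk ((by decide : ∀ k : Fin 6, uPos.comp k ≠ UpdComp.dec) k)

lemma upd_neg (e : EnergyE 6) (h : e 5 ≠ 0) : applyUpdE e uNeg = some (eNeg e) := by
  unfold applyUpdE
  rw [if_pos]
  · refine congrArg some (funext fun k => ?_)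
    fin_cases k
    · exact inf_insert_mem e 0 {0, 4} 0 4 (by decide)
    · rfl
    · rfl
    · rfl
    · rfl
    · rfl
  · intro k hk
    have hk0 : ∀ k : Fin 6, uNeg.comp k = UpdComp.dec → k = 5 := by decide
    rw [hk0 k hk]; exact h

lemma upd_neg_inv {e e' : EnergyE 6} (h : applyUpdE e uNeg = some e') :
    e 5 ≠ 0 ∧ e' = eNeg e := by
  by_cases h0 : e 5 = 0
  · exfalso
    unfold applyUpdE at h
    rw [if_neg] at h
    · exact absurd h (by simp)
    · intro hall; exact hall 5 (by decide) h0
  · rw [upd_neg e h0] at h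
    exact ⟨h0, (Option.some_inj.mp h).symm⟩

end CleverAux

namespace CleverAux

section Components
variable (e : EnergyE 6)

@[simp] lemma eObs_0 : eObs e 0 = e 0 - 1 := rfl
@[simp] lemma eObs_1 : eObs e 1 = e 1 := rfl
@[simp] lemma eObs_2 : eObs e 2 = e 2 := rfl
@[simp] lemma eObs_3 : eObs e 3 = e 3 := rfl
@[simp] lemma eObs_4 : eObs e 4 = e 4 := rfl
@[simp] lemma eObs_5 : eObs e 5 = e 5 := rfl
@[simp] lemma eConj_0 : eConj e 0 = e 0 := rfl
@[simp] lemma eConj_1 : eConj e 1 = e 1 - 1 := rfl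
@[simp] lemma eConj_2 : eConj e 2 = e 2 := rfl
@[simp] lemma eConj_3 : eConj e 3 = e 3 := rfl
@[simp] lemma eConj_4 : eConj e 4 = e 4 := rfl
@[simp] lemma eConj_5 : eConj e 5 = e 5 := rfl
@[simp] lemma eRev_0 : eRev e 0 = min (e 0) (e 2) := rfl
@[simp] lemma eRev_1 : eRev e 1 = e 1 := rfl
@[simp] lemma eRev_2 : eRev e 2 = e 2 := rfl
@[simp] lemma eRev_3 : eRev e 3 = e 3 := rfl
@[simp] lemma eRev_4 : eRev e 4 = e 4 := rfl
@[simp] lemma eRev_5 : eRev e 5 = e 5 := rfl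
@[simp] lemma eAns_0 : eAns e 0 = e 0 := rfl
@[simp] lemma eAns_1 : eAns e 1 = e 1 := rfl
@[simp] lemma eAns_2 : eAns e 2 = e 2 := rfl
@[simp] lemma eAns_3 : eAns e 3 = min (e 2) (e 3) := rfl
@[simp] lemma eAns_4 : eAns e 4 = e 4 := rfl
@[simp] lemma eAns_5 : eAns e 5 = e 5 := rfl
@[simp] lemma ePos_0 : ePos e 0 = min (e 0) (e 3) := rfl
@[simp] lemma ePos_1 : ePos e 1 = e 1 := rfl
@[simp] lemma ePos_2 : ePos e 2 = e 2 := rfl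
@[simp] lemma ePos_3 : ePos e 3 = e 3 := rfl
@[simp] lemma ePos_4 : ePos e 4 = e 4 := rfl
@[simp] lemma ePos_5 : ePos e 5 = e 5 := rfl
@[simp] lemma eNeg_0 : eNeg e 0 = min (e 0) (e 4) := rfl
@[simp] lemma eNeg_1 : eNeg e 1 = e 1 := rfl
@[simp] lemma eNeg_2 : eNeg e 2 = e 2 := rfl
@[simp] lemma eNeg_3 : eNeg e 3 = e 3 := rfl
@[simp] lemma eNeg_4 : eNeg e 4 = e 4 := rfl
@[simp] lemma eNeg_5 : eNeg e 5 = e 5 - 1 := rfl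

end Components

lemma min_ne_zero {a b : ℕ∞} (ha : a ≠ 0) (hb : b ≠ 0) : min a b ≠ 0 := by
  intro h
  rcases min_le_iff.mp h.le with h' | h'
  · exact ha (le_antisymm h' (zero_le))
  · exact hb (le_antisymm h' (zero_le))

lemma min_zero_left {a b : ℕ∞} (h : min a b = 0) (hb : b ≠ 0) : a = 0 := by
  rcases min_le_iff.mp h.le with h' | h'
  · exact le_antisymm h' (zero_le)
  · exact absurd (le_antisymm h' (zero_le)) hb

lemma ne_zero_one_le {a : ℕ∞} (h : a ≠ 0) : 1 ≤ a := ENat.one_le_iff_ne_zero.mpr h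

lemma eq_one_of_le_one {a : ℕ∞} (h1 : a ≤ 1) (h0 : a ≠ 0) : a = 1 :=
  le_antisymm h1 (ne_zero_one_le h0)

section Game
variable {P Act : Type} {step : P → Act → P → Prop}

lemma not_def_att {p : P} {Q : Set P} : ¬ (cleverGame step).defender (.att p Q) :=
  fun ⟨_, _, _, h⟩ => nomatch h

lemma not_def_attConj {p q : P} : ¬ (cleverGame step).defender (.attConj p q) :=
  fun ⟨_, _, _, h⟩ => nomatch h

lemma def_defp {p : P} {D S : Set P} : (cleverGame step).defender (.defp p D S) :=
  ⟨p, D, S, rfl⟩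

lemma snot_def_att {p : P} {Q : Set P} : ¬ (specGame step).defender (.att p Q) :=
  fun ⟨_, _, _, h⟩ => nomatch h

lemma snot_def_attConj {p q : P} : ¬ (specGame step).defender (.attConj p q) :=
  fun ⟨_, _, _, h⟩ => nomatch h

lemma sdef_defp {p : P} {D S : Set P} : (specGame step).defender (.defp p D S) :=
  ⟨p, D, S, rfl⟩

lemma wt_obs {p p' : P} {Q Q' : Set P} :
    (cleverGame step).weight (.att p Q) (.att p' Q') = uObs := rfl

lemma wt_conj {p p' : P} {Q D S : Set P} :
    (cleverGame step).weight (.att p Q) (.defp p' D S) = uConj := rfl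

lemma wt_rev {p p' : P} {D S R : Set P} :
    (cleverGame step).weight (.defp p D S) (.att p' R) = uRevival := rfl

lemma wt_ans {p p' q : P} {D S : Set P} :
    (cleverGame step).weight (.defp p D S) (.attConj p' q) = uAnswer := rfl

lemma wt_pos {p q : P} {R : Set P} :
    (cleverGame step).weight (.attConj p q) (.att p R) = uPos := if_pos rfl

lemma wt_neg {p q q' : P} {R : Set P} (h : p ≠ q') :
    (cleverGame step).weight (.attConj p q) (.att q' R) = uNeg := if_neg h

/-- The four clever challenge sets are subsets. -/
lemma clever_subset {p : P} {Q S : Set P}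
    (h : S = ∅ ∨
      S = {q ∈ Q | enabledActs step q ⊆ enabledActs step p} ∨
      S = {q ∈ Q | enabledActs step p ⊆ enabledActs step q} ∨
      S = {q ∈ Q | enabledActs step p = enabledActs step q}) :
    S ⊆ Q := by
  rcases h with rfl | rfl | rfl | rfl
  · exact Set.empty_subset _
  · exact Set.sep_subset _ _
  · exact Set.sep_subset _ _
  · exact Set.sep_subset _ _

lemma stepSet_empty {q : P} {a : Act} (h : a ∉ enabledActs step q) :
    stepSet step {q} a = ∅ := by
  ext x
  simp only [stepSet, Set.mem_setOf_eq, Set.mem_singleton_iff, Set.mem_empty_iff_false,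
    iff_false]
  rintro ⟨y, rfl, hy⟩
  exact h ⟨x, hy⟩

lemma stepSet_nonempty {Y : Set P} {a : Act} {y : P} (hy : y ∈ Y)
    (h : a ∈ enabledActs step y) : (stepSet step Y a).Nonempty := by
  obtain ⟨y', hy'⟩ := h
  exact ⟨y', y, hy, hy'⟩

lemma stepSet_mono {Y Y' : Set P} {a : Act} (h : Y' ⊆ Y) :
    stepSet step Y' a ⊆ stepSet step Y a := by
  rintro x ⟨y, hy, hs⟩
  exact ⟨y, h hy, hs⟩

end Game

end CleverAux

namespace CleverAux

section Game2
variable {P Act : Type} {step : P → Act → P → Prop}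

/-- If all energy-0 budget is gone, the attacker cannot win from a position
with a nonempty process set. -/
lemma noWinZero {g : SpecPos P} {e : EnergyE 6}
    (h : AttackerWins (cleverGame step) g e) :
    (match g with
     | .att _ Q => Q.Nonempty
     | .attConj _ _ => True
     | .defp _ D S => (D ∪ S).Nonempty) → e 0 ≠ 0 := by
  obtain ⟨g, rfl⟩ : ∃ g' : (cleverGame step).Pos, g' = g := ⟨g, rfl⟩
  induction h with
  | @attack g g' e e' hnd mv hupd _ ih =>
    cases mv with
    | @obs p p' Q a hstep => exact fun _ => (upd_obs_inv hupd).1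
    | @conjChallenge p Q S hc =>
      intro hQ
      rw [wt_conj] at hupd
      obtain ⟨h1, rfl⟩ := upd_conj_inv hupd
      have hne : ((Q \ S) ∪ S).Nonempty := by
        rw [Set.diff_union_of_subset (clever_subset hc)]; exact hQ
      simpa using ih hne
    | @posDecision p q =>
      intro _
      rw [wt_pos] at hupd
      rw [upd_pos] at hupd
      obtain rfl := Option.some_inj.mp hupd
      intro h0
      apply ih ⟨q, rfl⟩
      rw [ePos_0, h0]
      exact min_eq_left (zero_le)
    | @negDecision p q hpq =>
      intro _
      rw [wt_neg hpq] at hupd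
      obtain ⟨h5, rfl⟩ := upd_neg_inv hupd
      intro h0
      apply ih ⟨p, rfl⟩
      rw [eNeg_0, h0]
      exact min_eq_left (zero_le)
    | conjRevival h => exact absurd def_defp hnd
    | conjAnswer h => exact absurd def_defp hnd
  | @defend g e hd hsome hwins ih =>
    obtain ⟨p, D, S, rfl⟩ := hd
    rintro ⟨x, hx⟩
    rcases hx with hx | hx
    · have hupd : applyUpdE e ((cleverGame step).weight (.defp p D S) (.attConj p x)) =
          some (eAns e) := by rw [wt_ans]; exact upd_ans e
      have h := ih _ _ (CleverMove.conjAnswer hx) hupd trivial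
      simpa using h
    · have hS : S ≠ ∅ := Set.nonempty_iff_ne_empty.mp ⟨x, hx⟩
      have hupd : applyUpdE e ((cleverGame step).weight (.defp p D S) (.att p S)) =
          some (eRev e) := by rw [wt_rev]; exact upd_rev e
      have h := ih _ _ (CleverMove.conjRevival hS) hupd ⟨x, hx⟩
      intro h0
      apply h
      rw [eRev_0, h0]
      exact min_eq_left (zero_le)

/-- Any attacker win from a non-stuck position needs conjunction budget. -/
lemma win1 {g : SpecPos P} {e : EnergyE 6}
    (h : AttackerWins (cleverGame step) g e) :
    (match g with
     | .att _ _ => True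
     | .attConj _ _ => True
     | .defp _ D S => (D ∪ S).Nonempty) → e 1 ≠ 0 := by
  obtain ⟨g, rfl⟩ : ∃ g' : (cleverGame step).Pos, g' = g := ⟨g, rfl⟩
  induction h with
  | @attack g g' e e' hnd mv hupd _ ih =>
    cases mv with
    | @obs p p' Q a hstep =>
      intro _
      obtain ⟨h0, rfl⟩ := upd_obs_inv (by rw [wt_obs] at hupd; exact hupd)
      simpa using ih trivial
    | @conjChallenge p Q S hc =>
      intro _
      rw [wt_conj] at hupd
      exact (upd_conj_inv hupd).1
    | @posDecision p q =>
      intro _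
      rw [wt_pos, upd_pos] at hupd
      obtain rfl := Option.some_inj.mp hupd
      simpa using ih trivial
    | @negDecision p q hpq =>
      intro _
      rw [wt_neg hpq] at hupd
      obtain ⟨h5, rfl⟩ := upd_neg_inv hupd
      simpa using ih trivial
    | conjRevival h => exact absurd def_defp hnd
    | conjAnswer h => exact absurd def_defp hnd
  | @defend g e hd hsome hwins ih =>
    obtain ⟨p, D, S, rfl⟩ := hd
    rintro ⟨x, hx⟩
    rcases hx with hx | hx
    · have hupd : applyUpdE e ((cleverGame step).weight (.defp p D S) (.attConj p x)) =
          some (eAns e) := by rw [wt_ans]; exact upd_ans e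
      simpa using ih _ _ (CleverMove.conjAnswer hx) hupd trivial
    · have hS : S ≠ ∅ := Set.nonempty_iff_ne_empty.mp ⟨x, hx⟩
      have hupd : applyUpdE e ((cleverGame step).weight (.defp p D S) (.att p S)) =
          some (eRev e) := by rw [wt_rev]; exact upd_rev e
      simpa using ih _ _ (CleverMove.conjRevival hS) hupd trivial

/-- A defender position without moves is won by the attacker. -/
lemma winDefpNoMoves {p : P} {D S : Set P} (hD : D = ∅) (hS : S = ∅) {e : EnergyE 6} :
    AttackerWins (cleverGame step) (.defp p D S) e := by
  apply AttackerWins.defend def_defp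
  · intro g' mv
    cases mv with
    | conjRevival h => exact absurd hS h
    | conjAnswer h => rw [hD] at h; exact absurd h (Set.notMem_empty _)
  · intro g' e' mv _
    cases mv with
    | conjRevival h => exact absurd hS h
    | conjAnswer h => rw [hD] at h; exact absurd h (Set.notMem_empty _)

/-- Attacker wins `[p, ∅]` with conjunction budget. -/
lemma winEmpty {p : P} {Y : Set P} (hY : Y = ∅) {e : EnergyE 6} (h1 : e 1 ≠ 0) :
    AttackerWins (cleverGame step) (.att p Y) e :=
  AttackerWins.attack not_def_att (CleverMove.conjChallenge (Or.inl rfl))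
    (by rw [wt_conj]; exact upd_conj e h1)
    (winDefpNoMoves (by rw [hY]; simp) rfl)

/-- The attacker wins `[x, {y}]` by observing an action `y` lacks. -/
lemma killOne {x x' y : P} {a : Act} (hs : step x a x') (hna : a ∉ enabledActs step y)
    {e : EnergyE 6} (h0 : e 0 ≠ 0) (h1 : e 1 ≠ 0) :
    AttackerWins (cleverGame step) (.att x {y}) e :=
  AttackerWins.attack not_def_att (CleverMove.obs hs)
    (by rw [wt_obs]; exact upd_obs e h0)
    (winEmpty (stepSet_empty hna) (by simpa using h1))

lemma winPos {p q : P} {e : EnergyE 6}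
    (h : AttackerWins (cleverGame step) (.att p {q}) (ePos e)) :
    AttackerWins (cleverGame step) (.attConj p q) e :=
  AttackerWins.attack not_def_attConj CleverMove.posDecision
    (by rw [wt_pos]; exact upd_pos e) h

lemma winNeg {p q : P} {e : EnergyE 6} (hpq : p ≠ q) (h5 : e 5 ≠ 0)
    (h : AttackerWins (cleverGame step) (.att q {p}) (eNeg e)) :
    AttackerWins (cleverGame step) (.attConj p q) e :=
  AttackerWins.attack not_def_attConj (CleverMove.negDecision hpq)
    (by rw [wt_neg hpq]; exact upd_neg e h5) h

/-- Build a win at a defender position from wins at all successors. -/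
lemma winDefp {p : P} {D S : Set P} {e : EnergyE 6}
    (ha : ∀ q ∈ D, AttackerWins (cleverGame step) (.attConj p q) (eAns e))
    (hr : S ≠ ∅ → AttackerWins (cleverGame step) (.att p S) (eRev e)) :
    AttackerWins (cleverGame step) (.defp p D S) e := by
  apply AttackerWins.defend def_defp
  · intro g' mv
    cases mv with
    | conjRevival h => rw [wt_rev, upd_rev]; rfl
    | conjAnswer h => rw [wt_ans, upd_ans]; rfl
  · intro g' e' mv hupd
    cases mv with
    | conjRevival h =>
      rw [wt_rev, upd_rev] at hupd
      obtain rfl := Option.some_inj.mp hupd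
      exact hr h
    | conjAnswer h =>
      rw [wt_ans, upd_ans] at hupd
      obtain rfl := Option.some_inj.mp hupd
      exact ha _ h

/-- Build a win at `[p,Q]` via a clever conjunction challenge. -/
lemma winChallenge {p : P} {Q S : Set P} {e : EnergyE 6}
    (hc : S = ∅ ∨
      S = {q ∈ Q | enabledActs step q ⊆ enabledActs step p} ∨
      S = {q ∈ Q | enabledActs step p ⊆ enabledActs step q} ∨
      S = {q ∈ Q | enabledActs step p = enabledActs step q})
    (h1 : e 1 ≠ 0)
    (ha : ∀ q ∈ Q \ S, AttackerWins (cleverGame step) (.attConj p q) (eAns (eConj e)))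
    (hr : S ≠ ∅ → AttackerWins (cleverGame step) (.att p S) (eRev (eConj e))) :
    AttackerWins (cleverGame step) (.att p Q) e :=
  AttackerWins.attack not_def_att (CleverMove.conjChallenge hc)
    (by rw [wt_conj]; exact upd_conj e h1)
    (winDefp ha hr)

end Game2

end CleverAux

namespace CleverAux

lemma applyUpdE_mono {N : ℕ} {e e' : EnergyE N} (u : EnergyUpdate N) (hle : e ≤ e')
    {v : EnergyE N} (h : applyUpdE e u = some v) :
    ∃ v', applyUpdE e' u = some v' ∧ v ≤ v' := by
  unfold applyUpdE at h ⊢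
  by_cases hg : ∀ k, u.comp k = UpdComp.dec → e k ≠ 0
  · rw [if_pos hg] at h
    have hg' : ∀ k, u.comp k = UpdComp.dec → e' k ≠ 0 := by
      intro k hk h0
      exact hg k hk (le_antisymm (h0 ▸ hle k) (zero_le))
    rw [if_pos hg']
    refine ⟨_, rfl, ?_⟩
    obtain rfl := Option.some_inj.mp h
    intro k
    cases hc : u.comp k with
    | dec => simp only [hc]; exact tsub_le_tsub_right (hle k) 1
    | zero => simp only [hc]; exact hle k
    | minOf D =>
      simp only [hc]
      exact Finset.le_inf' _ _ fun b hb => le_trans (Finset.inf'_le _ hb) (hle b)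
  · rw [if_neg hg] at h; exact absurd h (by simp)

section Game3
variable {P Act : Type} {step : P → Act → P → Prop}

/-- Attacker winning budgets are upward closed. -/
lemma monE {g : SpecPos P} {e : EnergyE 6} (h : AttackerWins (cleverGame step) g e) :
    ∀ e', e ≤ e' → AttackerWins (cleverGame step) g e' := by
  obtain ⟨g, rfl⟩ : ∃ g' : (cleverGame step).Pos, g' = g := ⟨g, rfl⟩
  induction h with
  | @attack g g' e ev hnd mv hupd sub ih =>
    intro e' hle
    obtain ⟨v', hupd', hv⟩ := applyUpdE_mono _ hle hupd
    exact AttackerWins.attack hnd mv hupd' (ih v' hv)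
  | @defend g e hd hsome hwins ih =>
    intro e' hle
    apply AttackerWins.defend hd
    · intro g' mv
      obtain ⟨v, hv⟩ := Option.isSome_iff_exists.mp (hsome g' mv)
      obtain ⟨v', hupd', _⟩ := applyUpdE_mono _ hle hv
      rw [hupd']; rfl
    · intro g' w' mv hupd'
      obtain ⟨v, hv⟩ := Option.isSome_iff_exists.mp (hsome g' mv)
      obtain ⟨v', hupd'', hvv⟩ := applyUpdE_mono _ hle hv
      rw [hupd'] at hupd''
      obtain rfl := Option.some_inj.mp hupd''
      exact ih g' v mv hv _ hvv

/-- Attacker wins are monotone under shrinking the sets of defender processes. -/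
lemma monQ {g : SpecPos P} {e : EnergyE 6} (h : AttackerWins (cleverGame step) g e) :
    (match g with
     | .att p Q => ∀ Q' ⊆ Q, AttackerWins (cleverGame step) (.att p Q') e
     | .attConj _ _ => True
     | .defp p D S => ∀ D' ⊆ D, ∀ S' ⊆ S,
        AttackerWins (cleverGame step) (.defp p D' S') e) := by
  obtain ⟨g, rfl⟩ : ∃ g' : (cleverGame step).Pos, g' = g := ⟨g, rfl⟩
  induction h with
  | @attack g g' e ev hnd mv hupd sub ih =>
    cases mv with
    | @obs p p' Q a hs =>
      intro Q' hQ'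
      obtain ⟨h0, rfl⟩ := upd_obs_inv (by rw [wt_obs] at hupd; exact hupd)
      exact AttackerWins.attack not_def_att (CleverMove.obs hs)
        (by rw [wt_obs]; exact upd_obs e h0)
        (ih _ (stepSet_mono hQ'))
    | @conjChallenge p Q S hc =>
      intro Q' hQ'
      rw [wt_conj] at hupd
      obtain ⟨h1, rfl⟩ := upd_conj_inv hupd
      have hc' : (S ∩ Q') = ∅ ∨
          (S ∩ Q') = {q ∈ Q' | enabledActs step q ⊆ enabledActs step p} ∨
          (S ∩ Q') = {q ∈ Q' | enabledActs step p ⊆ enabledActs step q} ∨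
          (S ∩ Q') = {q ∈ Q' | enabledActs step p = enabledActs step q} := by
        rcases hc with rfl | rfl | rfl | rfl
        · exact Or.inl (Set.empty_inter _)
        · exact Or.inr (Or.inl (Set.ext fun q =>
            ⟨fun ⟨⟨_, hφ⟩, hq'⟩ => ⟨hq', hφ⟩, fun ⟨hq', hφ⟩ => ⟨⟨hQ' hq', hφ⟩, hq'⟩⟩))
        · exact Or.inr (Or.inr (Or.inl (Set.ext fun q =>
            ⟨fun ⟨⟨_, hφ⟩, hq'⟩ => ⟨hq', hφ⟩, fun ⟨hq', hφ⟩ => ⟨⟨hQ' hq', hφ⟩, hq'⟩⟩)))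
        · exact Or.inr (Or.inr (Or.inr (Set.ext fun q =>
            ⟨fun ⟨⟨_, hφ⟩, hq'⟩ => ⟨hq', hφ⟩, fun ⟨hq', hφ⟩ => ⟨⟨hQ' hq', hφ⟩, hq'⟩⟩)))
      have hdsub : Q' \ (S ∩ Q') ⊆ Q \ S := by
        rintro q ⟨hq, hq2⟩
        exact ⟨hQ' hq, fun hqs => hq2 ⟨hqs, hq⟩⟩
      exact AttackerWins.attack not_def_att (CleverMove.conjChallenge hc')
        (by rw [wt_conj]; exact upd_conj e h1)
        (ih _ hdsub _ Set.inter_subset_left)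
    | posDecision => trivial
    | negDecision hpq => trivial
    | conjRevival h => exact absurd def_defp hnd
    | conjAnswer h => exact absurd def_defp hnd
  | @defend g e hd hsome hwins ih =>
    obtain ⟨p, D, S, rfl⟩ := hd
    intro D' hD' S' hS'
    apply winDefp
    · intro q hq
      exact hwins _ _ (CleverMove.conjAnswer (hD' hq)) (by rw [wt_ans]; exact upd_ans e)
    · intro hS'ne
      have hSne : S ≠ ∅ := by
        obtain ⟨x, hx⟩ := Set.nonempty_iff_ne_empty.mpr hS'ne
        exact Set.nonempty_iff_ne_empty.mp ⟨x, hS' hx⟩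
      have := ih _ _ (CleverMove.conjRevival hSne) (by rw [wt_rev]; exact upd_rev e)
      exact this _ hS'

end Game3

end CleverAux

namespace CleverAux

section Game4
variable {P Act : Type} {step : P → Act → P → Prop}

/-- With positive and negative depth budgets at most 1, the attacker cannot
distinguish processes with equal enabled sets. -/
lemma L1 {g : SpecPos P} {e : EnergyE 6} (h : AttackerWins (cleverGame step) g e) :
    e 3 ≤ 1 → e 4 ≤ 1 →
    (match g with
     | .att x Y => ∃ y, Y = {y} ∧ enabledActs step x = enabledActs step y ∧ e 0 ≤ 1
     | .attConj x y => enabledActs step x = enabledActs step y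
     | .defp x D S => ∃ y, D ∪ S = {y} ∧ enabledActs step x = enabledActs step y ∧
        e 0 ≤ 1) →
    False := by
  obtain ⟨g, rfl⟩ : ∃ g' : (cleverGame step).Pos, g' = g := ⟨g, rfl⟩
  induction h with
  | @attack g g' e ev hnd mv hupd sub ih =>
    intro h3 h4
    cases mv with
    | @obs x x' Y a hs =>
      rintro ⟨y, rfl, hI, h0⟩
      obtain ⟨h0ne, rfl⟩ := upd_obs_inv (by rw [wt_obs] at hupd; exact hupd)
      have ha : a ∈ enabledActs step y := hI ▸ ⟨x', hs⟩
      exact noWinZero sub (stepSet_nonempty rfl ha) (tsub_eq_zero_of_le h0)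
    | @conjChallenge x Y S hc =>
      rintro ⟨y, rfl, hI, h0⟩
      rw [wt_conj] at hupd
      obtain ⟨h1, rfl⟩ := upd_conj_inv hupd
      exact ih (by simpa using h3) (by simpa using h4)
        ⟨y, Set.diff_union_of_subset (clever_subset hc), hI, by simpa using h0⟩
    | @posDecision x y =>
      intro hI
      rw [wt_pos, upd_pos] at hupd
      obtain rfl := Option.some_inj.mp hupd
      exact ih (by simpa using h3) (by simpa using h4)
        ⟨y, rfl, hI, le_trans (min_le_right _ _) h3⟩
    | @negDecision x y hxy =>
      intro hI
      rw [wt_neg hxy] at hupd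
      obtain ⟨h5, rfl⟩ := upd_neg_inv hupd
      exact ih (by simpa using h3) (by simpa using h4)
        ⟨x, rfl, hI.symm, le_trans (min_le_right _ _) h4⟩
    | conjRevival h => exact absurd def_defp hnd
    | conjAnswer h => exact absurd def_defp hnd
  | @defend g e hd hsome hwins ih =>
    obtain ⟨x, D, S, rfl⟩ := hd
    intro h3 h4
    rintro ⟨y, hDS, hI, h0⟩
    by_cases hyS : y ∈ S
    · have hS : S ≠ ∅ := Set.nonempty_iff_ne_empty.mp ⟨y, hyS⟩
      have hSy : S = {y} :=
        Set.Subset.antisymm (hDS ▸ Set.subset_union_right)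
          (Set.singleton_subset_iff.mpr hyS)
      exact ih _ _ (CleverMove.conjRevival hS) (by rw [wt_rev]; exact upd_rev e)
        (by simpa using h3) (by simpa using h4)
        ⟨y, hSy, hI, le_trans (min_le_left _ _) h0⟩
    · have hyD : y ∈ D := by
        have hmem : y ∈ D ∪ S := by rw [hDS]; exact rfl
        rcases hmem with hmem | hmem
        · exact hmem
        · exact absurd hmem hyS
      exact ih _ _ (CleverMove.conjAnswer hyD) (by rw [wt_ans]; exact upd_ans e)
        (le_trans (min_le_right _ _) h3) (by simpa using h4) hI

/-- If negative decisions are unaffordable, the attacker cannot win against a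
process whose enabled set contains that of the challenger (with low budgets). -/
lemma L2 {g : SpecPos P} {e : EnergyE 6} (h : AttackerWins (cleverGame step) g e) :
    e 3 ≤ 1 → (e 4 = 0 ∨ e 5 = 0) →
    (match g with
     | .att x Y => (∃ y ∈ Y, enabledActs step x ⊆ enabledActs step y) ∧ e 0 ≤ 1
     | .attConj x y => enabledActs step x ⊆ enabledActs step y
     | .defp x D S => (∃ y ∈ D ∪ S, enabledActs step x ⊆ enabledActs step y) ∧
        e 0 ≤ 1) →
    False := by
  obtain ⟨g, rfl⟩ : ∃ g' : (cleverGame step).Pos, g' = g := ⟨g, rfl⟩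
  induction h with
  | @attack g g' e ev hnd mv hupd sub ih =>
    intro h3 h45
    cases mv with
    | @obs x x' Y a hs =>
      rintro ⟨⟨y, hy, hI⟩, h0⟩
      obtain ⟨h0ne, rfl⟩ := upd_obs_inv (by rw [wt_obs] at hupd; exact hupd)
      exact noWinZero sub (stepSet_nonempty hy (hI ⟨x', hs⟩)) (tsub_eq_zero_of_le h0)
    | @conjChallenge x Y S hc =>
      rintro ⟨⟨y, hy, hI⟩, h0⟩
      rw [wt_conj] at hupd
      obtain ⟨h1, rfl⟩ := upd_conj_inv hupd
      refine ih (by simpa using h3) (by simpa using h45)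
        ⟨⟨y, ?_, hI⟩, by simpa using h0⟩
      rw [Set.diff_union_of_subset (clever_subset hc)]
      exact hy
    | @posDecision x y =>
      intro hI
      rw [wt_pos, upd_pos] at hupd
      obtain rfl := Option.some_inj.mp hupd
      exact ih (by simpa using h3) (by simpa using h45)
        ⟨⟨y, rfl, hI⟩, le_trans (min_le_right _ _) h3⟩
    | @negDecision x y hxy =>
      intro hI
      rw [wt_neg hxy] at hupd
      obtain ⟨h5, rfl⟩ := upd_neg_inv hupd
      rcases h45 with h40 | h50
      · refine noWinZero sub ⟨x, rfl⟩ ?_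
        show min (e 0) (e 4) = 0
        rw [h40]
        exact min_eq_right (zero_le)
      · exact h5 h50
    | conjRevival h => exact absurd def_defp hnd
    | conjAnswer h => exact absurd def_defp hnd
  | @defend g e hd hsome hwins ih =>
    obtain ⟨x, D, S, rfl⟩ := hd
    intro h3 h45
    rintro ⟨⟨y, hy, hI⟩, h0⟩
    rcases hy with hy | hy
    · exact ih _ _ (CleverMove.conjAnswer hy) (by rw [wt_ans]; exact upd_ans e)
        (le_trans (min_le_right _ _) h3) (by simpa using h45) hI
    · have hS : S ≠ ∅ := Set.nonempty_iff_ne_empty.mp ⟨y, hy⟩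
      exact ih _ _ (CleverMove.conjRevival hS) (by rw [wt_rev]; exact upd_rev e)
        (by simpa using h3) (by simpa using h45)
        ⟨⟨y, hy, hI⟩, le_trans (min_le_left _ _) h0⟩

/-- With at most one observation and one conjunction left, the attacker cannot
win against a process whose enabled set contains that of the challenger. -/
lemma L4 {x : P} {Y : Set P} {e : EnergyE 6}
    (h : AttackerWins (cleverGame step) (.att x Y) e)
    (hw : ∃ y ∈ Y, enabledActs step x ⊆ enabledActs step y)
    (h0 : e 0 ≤ 1) (h1 : e 1 ≤ 1) : False := by
  obtain ⟨y, hy, hI⟩ := hw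
  obtain ⟨g, hg⟩ : ∃ g : (cleverGame step).Pos, g = .att x Y := ⟨_, rfl⟩
  rw [← hg] at h
  cases h with
  | defend hd => subst hg; exact not_def_att hd
  | attack hnd mv hupd sub =>
    subst hg
    cases mv with
    | @obs _ x' _ a hs =>
      obtain ⟨h0ne, rfl⟩ := upd_obs_inv (by rw [wt_obs] at hupd; exact hupd)
      exact noWinZero sub (stepSet_nonempty hy (hI ⟨x', hs⟩)) (tsub_eq_zero_of_le h0)
    | @conjChallenge _ _ S hc =>
      rw [wt_conj] at hupd
      obtain ⟨h1ne, rfl⟩ := upd_conj_inv hupd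
      have h1z : eConj e 1 = 0 := tsub_eq_zero_of_le h1
      obtain ⟨g2, hg2⟩ : ∃ g : (cleverGame step).Pos, g = .defp x (Y \ S) S := ⟨_, rfl⟩
      rw [← hg2] at sub
      cases sub with
      | attack hnd' mv' hupd' sub' => subst hg2; exact absurd def_defp hnd'
      | defend hd' hsome' hwins' =>
        subst hg2
        by_cases hyS : y ∈ S
        · have w := hwins' _ _
            (CleverMove.conjRevival (Set.nonempty_iff_ne_empty.mp ⟨y, hyS⟩))
            (by rw [wt_rev]; exact upd_rev _)
          exact win1 w trivial h1z
        · have w := hwins' _ _ (CleverMove.conjAnswer ⟨hy, hyS⟩)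
            (by rw [wt_ans]; exact upd_ans _)
          exact win1 w trivial h1z

end Game4

end CleverAux

namespace CleverAux

lemma enat_le_one {a : ℕ∞} (h : a ≤ 1) : a = 0 ∨ a = 1 := by
  induction a using ENat.recTopCoe with
  | top => exact absurd h (by simp)
  | coe n =>
    have hn : n ≤ 1 := by exact_mod_cast h
    rcases Nat.le_one_iff_eq_zero_or_eq_one.mp hn with h | h <;> subst h
    · left; rfl
    · right; rfl

section Game5
variable {P Act : Type} {step : P → Act → P → Prop}

lemma swt_obs {p p' : P} {Q Q' : Set P} :
    (specGame step).weight (.att p Q) (.att p' Q') = uObs := rfl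

lemma swt_conj {p p' : P} {Q D S : Set P} :
    (specGame step).weight (.att p Q) (.defp p' D S) = uConj := rfl

lemma swt_rev {p p' : P} {D S R : Set P} :
    (specGame step).weight (.defp p D S) (.att p' R) = uRevival := rfl

lemma swt_ans {p p' q : P} {D S : Set P} :
    (specGame step).weight (.defp p D S) (.attConj p' q) = uAnswer := rfl

lemma swt_pos {p q : P} {R : Set P} :
    (specGame step).weight (.attConj p q) (.att p R) = uPos := if_pos rfl

lemma swt_neg {p q q' : P} {R : Set P} (h : p ≠ q') :
    (specGame step).weight (.attConj p q) (.att q' R) = uNeg := if_neg h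

/-- Every clever win is a win of the full spectroscopy game. -/
lemma clever_to_spec {g : SpecPos P} {e : EnergyE 6}
    (h : AttackerWins (cleverGame step) g e) : AttackerWins (specGame step) g e := by
  obtain ⟨g, rfl⟩ : ∃ g' : (cleverGame step).Pos, g' = g := ⟨g, rfl⟩
  induction h with
  | @attack g g' e e' hnd mv hupd sub ih =>
    cases mv with
    | obs hs => exact AttackerWins.attack hnd (SpecMove.obs hs) hupd ih
    | conjChallenge hc =>
      exact AttackerWins.attack hnd (SpecMove.conjChallenge (clever_subset hc)) hupd ih
    | conjRevival h => exact AttackerWins.attack hnd (SpecMove.conjRevival h) hupd ih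
    | conjAnswer h => exact AttackerWins.attack hnd (SpecMove.conjAnswer h) hupd ih
    | posDecision => exact AttackerWins.attack hnd SpecMove.posDecision hupd ih
    | negDecision hne => exact AttackerWins.attack hnd (SpecMove.negDecision hne) hupd ih
  | @defend g e hd hsome hwins ih =>
    obtain ⟨p, D, S, rfl⟩ := hd
    apply AttackerWins.defend sdef_defp
    · intro g' mv
      cases mv with
      | conjRevival h => exact hsome _ (CleverMove.conjRevival h)
      | conjAnswer h => exact hsome _ (CleverMove.conjAnswer h)
    · intro g' e' mv hupd
      cases mv with
      | conjRevival h => exact ih _ _ (CleverMove.conjRevival h) hupd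
      | conjAnswer h => exact ih _ _ (CleverMove.conjAnswer h) hupd

/-- The budget invariant of Theorem 2. -/
def Inv (e : EnergyE 6) : Prop :=
  (e 3 = 0 ∨ e 3 = 1 ∨ e 3 = ⊤) ∧ e 3 ≤ e 2 ∧ (1 < e 4 → e 2 = e 3)

lemma Inv_comp {e e' : EnergyE 6} (h : Inv e) (h2 : e' 2 = e 2) (h3 : e' 3 = e 3)
    (h4 : e' 4 = e 4) : Inv e' := by
  unfold Inv at h ⊢
  rw [h2, h3, h4]
  exact h

lemma Inv_eAns {e : EnergyE 6} (h : Inv e) : eAns e = e := by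
  funext k
  show (if k = 3 then min (e 2) (e 3) else e k) = e k
  split_ifs with hk
  · subst hk; exact min_eq_right h.2.1
  · rfl

/-- Budget facts extracted from any clever win at a conjunct position. -/
lemma witFacts {p q : P} {f : EnergyE 6}
    (h : AttackerWins (cleverGame step) (.attConj p q) f)
    (h3 : f 3 ≤ 1) (h4 : f 4 ≤ 1) :
    f 0 ≠ 0 ∧ f 1 ≠ 0 ∧ (f 3 = 1 ∨ (f 4 = 1 ∧ f 5 ≠ 0)) := by
  obtain ⟨g, hg⟩ : ∃ g : (cleverGame step).Pos, g = .attConj p q := ⟨_, rfl⟩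
  rw [← hg] at h
  cases h with
  | defend hd => subst hg; exact absurd hd not_def_attConj
  | attack hnd mv hupd sub =>
    subst hg
    cases mv with
    | posDecision =>
      rw [wt_pos, upd_pos] at hupd
      obtain rfl := Option.some_inj.mp hupd
      have hmin : min (f 0) (f 3) ≠ 0 := noWinZero sub ⟨q, rfl⟩
      have h0 : f 0 ≠ 0 := fun hz => hmin (by rw [hz]; exact min_eq_left (zero_le))
      have h3z : f 3 ≠ 0 := fun hz => hmin (by rw [hz]; exact min_eq_right (zero_le))
      exact ⟨h0, by simpa using win1 sub trivial, Or.inl (eq_one_of_le_one h3 h3z)⟩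
    | negDecision hpq =>
      rw [wt_neg hpq] at hupd
      obtain ⟨h5, rfl⟩ := upd_neg_inv hupd
      have hmin : min (f 0) (f 4) ≠ 0 := noWinZero sub ⟨p, rfl⟩
      have h0 : f 0 ≠ 0 := fun hz => hmin (by rw [hz]; exact min_eq_left (zero_le))
      have h4z : f 4 ≠ 0 := fun hz => hmin (by rw [hz]; exact min_eq_right (zero_le))
      exact ⟨h0, by simpa using win1 sub trivial, Or.inr ⟨eq_one_of_le_one h4 h4z, h5⟩⟩

/-- Answering a conjunct by a positive decision and a distinguishing observation. -/
lemma posKill {p q : P} {f : EnergyE 6} (h3 : f 3 = 1) (h0 : f 0 ≠ 0) (h1 : f 1 ≠ 0)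
    (hdiff : ¬ enabledActs step p ⊆ enabledActs step q) :
    AttackerWins (cleverGame step) (.attConj p q) f := by
  obtain ⟨a, ha, hna⟩ := Set.not_subset.mp hdiff
  obtain ⟨p', hp'⟩ := ha
  apply winPos
  exact killOne hp' hna
    (by rw [ePos_0, h3]; exact min_ne_zero h0 one_ne_zero) (by simpa using h1)

/-- Answering a conjunct by a negative decision and a distinguishing observation. -/
lemma negKill {p q : P} {f : EnergyE 6} (h4 : f 4 = 1) (h5 : f 5 ≠ 0)
    (h0 : f 0 ≠ 0) (h1 : f 1 ≠ 0)
    (hdiff : ¬ enabledActs step q ⊆ enabledActs step p) :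
    AttackerWins (cleverGame step) (.attConj p q) f := by
  obtain ⟨a, ha, hna⟩ := Set.not_subset.mp hdiff
  have hpq : p ≠ q := fun h => hna (h ▸ ha)
  obtain ⟨q', hq'⟩ := ha
  apply winNeg hpq h5
  exact killOne hq' hna
    (by rw [eNeg_0, h4]; exact min_ne_zero h0 one_ne_zero) (by simpa using h1)

/-- Answering a conjunct by two negative decisions and an observation. -/
lemma negnegKill {p q : P} {f : EnergyE 6} (h4 : f 4 = 1) (h5 : f 5 ≠ 0) (h5' : f 5 ≠ 1)
    (h0 : f 0 ≠ 0) (h1 : f 1 ≠ 0) (h1' : f 1 ≠ 1)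
    (hdiff : ¬ enabledActs step p ⊆ enabledActs step q) :
    AttackerWins (cleverGame step) (.attConj p q) f := by
  obtain ⟨a, ha, hna⟩ := Set.not_subset.mp hdiff
  have hpq : p ≠ q := fun h => hna (h ▸ ha)
  obtain ⟨p', hp'⟩ := ha
  apply winNeg hpq h5
  refine winChallenge (Or.inl rfl) (by simpa using h1) ?_ (fun h => absurd rfl h)
  intro y hy
  have hyp : y = p := hy.1
  subst hyp
  refine winNeg (Ne.symm hpq) ?_ ?_
  · show f 5 - 1 ≠ 0
    intro hz
    rcases enat_le_one (tsub_eq_zero_iff_le.mp hz) with h | h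
    · exact h5 h
    · exact h5' h
  · refine killOne hp' hna ?_ ?_
    · show min (min (f 0) (f 4)) (f 4) ≠ 0
      rw [h4]
      exact min_ne_zero (min_ne_zero h0 one_ne_zero) one_ne_zero
    · show f 1 - 1 ≠ 0
      intro hz
      rcases enat_le_one (tsub_eq_zero_iff_le.mp hz) with h | h
      · exact h1 h
      · exact h1' h

/-- If the budget allows neither flips nor deep positives, conjuncts with a
smaller enabled set cannot be answered. -/
lemma B3bImpossible {p q : P} {f : EnergyE 6}
    (h : AttackerWins (cleverGame step) (.attConj p q) f)
    (h30 : f 3 = 0) (h4le : f 4 ≤ 1)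
    (hqp : enabledActs step q ⊆ enabledActs step p)
    (hsmall : ¬ (f 5 ≠ 1 ∧ f 1 ≠ 1)) : False := by
  obtain ⟨g, hg⟩ : ∃ g : (cleverGame step).Pos, g = .attConj p q := ⟨_, rfl⟩
  rw [← hg] at h
  cases h with
  | defend hd => subst hg; exact absurd hd not_def_attConj
  | attack hnd mv hupd sub =>
    subst hg
    cases mv with
    | posDecision =>
      rw [wt_pos, upd_pos] at hupd
      obtain rfl := Option.some_inj.mp hupd
      refine noWinZero sub ⟨q, rfl⟩ ?_
      show min (f 0) (f 3) = 0
      rw [h30]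
      exact min_eq_right (zero_le)
    | negDecision hpq =>
      rw [wt_neg hpq] at hupd
      obtain ⟨h5, rfl⟩ := upd_neg_inv hupd
      by_cases h51 : f 5 = 1
      · refine L2 sub ?_ (Or.inr ?_) ⟨⟨p, rfl, hqp⟩, ?_⟩
        · show f 3 ≤ 1; rw [h30]; exact zero_le
        · show f 5 - 1 = 0; rw [h51]; exact tsub_self 1
        · exact le_trans (min_le_right _ _) h4le
      · have h11 : f 1 = 1 := by
          by_contra h11
          exact hsmall ⟨h51, h11⟩
        refine L4 sub ⟨p, rfl, hqp⟩ (le_trans (min_le_right _ _) h4le) ?_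
        show f 1 ≤ 1
        exact le_of_eq h11

end Game5

end CleverAux

namespace CleverAux

section Game6
variable {P Act : Type} {step : P → Act → P → Prop}

/-- The heart of Theorem 2: any spectroscopy conjunction challenge can be
replaced by a clever one. -/
lemma challengeCase {p : P} {Q S : Set P} {e : EnergyE 6}
    (hInv : Inv e) (h1 : e 1 ≠ 0) (hsub : S ⊆ Q)
    (H1 : ∀ q ∈ Q \ S, AttackerWins (cleverGame step) (.attConj p q) (eConj e))
    (H2 : S ≠ ∅ → AttackerWins (cleverGame step) (.att p S) (eRev (eConj e))) :
    AttackerWins (cleverGame step) (.att p Q) e := by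
  have hInvf : Inv (eConj e) := Inv_comp hInv rfl rfl rfl
  have hAns : eAns (eConj e) = eConj e := Inv_eAns hInvf
  by_cases hS0 : S = ∅
  · subst hS0
    refine winChallenge (Or.inl rfl) h1 ?_ (fun h => absurd rfl h)
    intro q hq
    rw [hAns]
    exact H1 q hq
  · by_cases hSQ : S = Q
    · subst hSQ
      refine monE (H2 hS0) e ?_
      intro k
      fin_cases k
      · exact min_le_left _ _
      · exact tsub_le_self
      · exact le_refl _
      · exact le_refl _
      · exact le_refl _
      · exact le_refl _
    · obtain ⟨q0, hq0Q, hq0S⟩ := Set.exists_of_ssubset (ssubset_of_subset_of_ne hsub hSQ)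
      by_cases hX : e 2 = e 3
      · -- positive decisions are as good as revivals
        refine winChallenge (Or.inl rfl) h1 ?_ (fun h => absurd rfl h)
        intro q hq
        rw [hAns]
        by_cases hqS : q ∈ S
        · apply winPos
          have hmono := monQ (H2 hS0) _ (Set.singleton_subset_iff.mpr hqS)
          have hPR : ePos (eConj e) = eRev (eConj e) := by
            funext k
            show (if k = 0 then min (eConj e 0) (eConj e 3) else eConj e k)
              = (if k = 0 then min (eConj e 0) (eConj e 2) else eConj e k)
            rw [show eConj e 3 = e 3 from rfl, show eConj e 2 = e 2 from rfl, hX]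
          rw [hPR]
          exact hmono
        · exact H1 q ⟨hq.1, hqS⟩
      · -- degenerate budgets
        have hf3 : e 3 = 0 ∨ e 3 = 1 := by
          rcases hInv.1 with h | h | h
          · exact Or.inl h
          · exact Or.inr h
          · exfalso
            apply hX
            have h2top : e 2 = ⊤ := top_le_iff.mp (le_trans (le_of_eq h.symm) hInv.2.1)
            rw [h2top, h]
        have hf4 : e 4 ≤ 1 := by
          by_contra hgt
          exact hX (hInv.2.2 (lt_of_not_ge hgt))
        have h3le : e 3 ≤ 1 := by
          rcases hf3 with h | h
          · rw [h]; exact zero_le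
          · exact le_of_eq h
        obtain ⟨hf0, hf1c, hdisj⟩ := witFacts (H1 q0 ⟨hq0Q, hq0S⟩) h3le hf4
        rcases hf3 with h30 | h31
        · -- e₄ = 0 : only negative decisions help
          obtain ⟨h41, h5ne⟩ : e 4 = 1 ∧ e 5 ≠ 0 := by
            rcases hdisj with h | h
            · rw [show eConj e 3 = e 3 from rfl, h30] at h
              exact absurd h (by norm_num)
            · exact h
          by_cases hBig : e 5 ≠ 1 ∧ e 1 - 1 ≠ 1
          · -- flips affordable: challenge with the equal-enabled set
            refine winChallenge (Or.inr (Or.inr (Or.inr rfl))) h1 ?_ ?_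
            · intro q hq
              rw [hAns]
              have hne : enabledActs step p ≠ enabledActs step q :=
                fun hc => hq.2 ⟨hq.1, hc⟩
              by_cases hps : enabledActs step p ⊆ enabledActs step q
              · exact negKill h41 h5ne hf0 hf1c
                  (fun h' => hne (Set.Subset.antisymm hps h'))
              · exact negnegKill h41 h5ne hBig.1 hf0 hf1c hBig.2 hps
            · intro hne
              have hsub' : {q ∈ Q | enabledActs step p = enabledActs step q} ⊆ S := by
                intro q hq
                by_contra hqS
                exact L1 (H1 q ⟨hq.1, hqS⟩) h3le hf4 hq.2
              exact monQ (H2 hS0) _ hsub'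
          · -- no flips: challenge with the smaller-enabled set
            refine winChallenge (Or.inr (Or.inl rfl)) h1 ?_ ?_
            · intro q hq
              rw [hAns]
              exact negKill h41 h5ne hf0 hf1c (fun h' => hq.2 ⟨hq.1, h'⟩)
            · intro hne
              have hsub' : {q ∈ Q | enabledActs step q ⊆ enabledActs step p} ⊆ S := by
                intro q hq
                by_contra hqS
                exact B3bImpossible (H1 q ⟨hq.1, hqS⟩) h30 hf4 hq.2 hBig
              exact monQ (H2 hS0) _ hsub'
        · -- e₄ = 1 : positive decisions available
          by_cases hNN : e 4 = 0 ∨ e 5 = 0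
          · -- no negative decisions ever: larger-enabled set
            refine winChallenge (Or.inr (Or.inr (Or.inl rfl))) h1 ?_ ?_
            · intro q hq
              rw [hAns]
              exact posKill h31 hf0 hf1c (fun hc => hq.2 ⟨hq.1, hc⟩)
            · intro hne
              have hsub' : {q ∈ Q | enabledActs step p ⊆ enabledActs step q} ⊆ S := by
                intro q hq
                by_contra hqS
                exact L2 (H1 q ⟨hq.1, hqS⟩) h3le hNN hq.2
              exact monQ (H2 hS0) _ hsub'
          · push_neg at hNN
            have h41 : e 4 = 1 := eq_one_of_le_one hf4 hNN.1
            refine winChallenge (Or.inr (Or.inr (Or.inr rfl))) h1 ?_ ?_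
            · intro q hq
              rw [hAns]
              have hne : enabledActs step p ≠ enabledActs step q :=
                fun hc => hq.2 ⟨hq.1, hc⟩
              by_cases hps : enabledActs step p ⊆ enabledActs step q
              · exact negKill h41 hNN.2 hf0 hf1c
                  (fun h' => hne (Set.Subset.antisymm hps h'))
              · exact posKill h31 hf0 hf1c hps
            · intro hne
              have hsub' : {q ∈ Q | enabledActs step p = enabledActs step q} ⊆ S := by
                intro q hq
                by_contra hqS
                exact L1 (H1 q ⟨hq.1, hqS⟩) h3le hf4 hq.2
              exact monQ (H2 hS0) _ hsub'

/-- Hard direction of Theorem 2. -/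
lemma spec_to_clever {g : SpecPos P} {e : EnergyE 6}
    (h : AttackerWins (specGame step) g e) :
    Inv e →
    (match g with
     | .att p Q => AttackerWins (cleverGame step) (.att p Q) e
     | .attConj p q => AttackerWins (cleverGame step) (.attConj p q) e
     | .defp p D S =>
        (∀ q ∈ D, AttackerWins (cleverGame step) (.attConj p q) (eAns e)) ∧
        (S ≠ ∅ → AttackerWins (cleverGame step) (.att p S) (eRev e))) := by
  obtain ⟨g, rfl⟩ : ∃ g' : (specGame step).Pos, g' = g := ⟨g, rfl⟩
  induction h with
  | @attack g g' e ev hnd mv hupd sub ih =>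
    intro hInv
    cases mv with
    | @obs p p' Q a hs =>
      obtain ⟨h0, rfl⟩ := upd_obs_inv (by rw [swt_obs] at hupd; exact hupd)
      exact AttackerWins.attack not_def_att (CleverMove.obs hs)
        (by rw [wt_obs]; exact upd_obs e h0)
        (ih (Inv_comp hInv rfl rfl rfl))
    | @conjChallenge p Q S hsub =>
      rw [swt_conj] at hupd
      obtain ⟨h1, rfl⟩ := upd_conj_inv hupd
      have hInvf : Inv (eConj e) := Inv_comp hInv rfl rfl rfl
      obtain ⟨H1, H2⟩ := ih hInvf
      rw [Inv_eAns hInvf] at H1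
      exact challengeCase hInv h1 hsub H1 H2
    | @posDecision p q =>
      rw [swt_pos, upd_pos] at hupd
      obtain rfl := Option.some_inj.mp hupd
      exact winPos (ih (Inv_comp hInv rfl rfl rfl))
    | @negDecision p q hpq =>
      rw [swt_neg hpq] at hupd
      obtain ⟨h5, rfl⟩ := upd_neg_inv hupd
      exact winNeg hpq h5 (ih (Inv_comp hInv rfl rfl rfl))
    | conjRevival h => exact absurd sdef_defp hnd
    | conjAnswer h => exact absurd sdef_defp hnd
  | @defend g e hd hsome hwins ih =>
    obtain ⟨p, D, S, rfl⟩ := hd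
    intro hInv
    constructor
    · intro q hq
      exact ih _ _ (SpecMove.conjAnswer hq) (by rw [swt_ans]; exact upd_ans e)
        (Inv_comp hInv rfl (min_eq_right hInv.2.1) rfl)
    · intro hS
      exact ih _ _ (SpecMove.conjRevival hS) (by rw [swt_rev]; exact upd_rev e)
        (Inv_comp hInv rfl rfl rfl)

end Game6

end CleverAux

/-- **Correctness of cleverness** (Theorem 2): for budgets with `e_4 ∈ {0,1,∞}`,
`e_4 ≤ e_3`, and `e_5 > 1 → e_3 = e_4`, the attacker wins the clever spectroscopy
game `G▲` from `[p0,Q0]_a` with budget `e` iff they win `G△` from there with `e`.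
(Components are 0-indexed: `e_4` is `e 3`, `e_3` is `e 2`, `e_5` is `e 4`.) -/
theorem clever_spectroscopy_correctness {P Act : Type} [Fintype P] [Fintype Act]
    (step : P → Act → P → Prop) (p0 : P) (Q0 : Set P) (e : EnergyE 6)
    (h4 : e 3 = 0 ∨ e 3 = 1 ∨ e 3 = ⊤)
    (h43 : e 3 ≤ e 2)
    (h5 : 1 < e 4 → e 2 = e 3) :
    AttackerWins (cleverGame step) (SpecPos.att p0 Q0) e ↔
      AttackerWins (specGame step) (SpecPos.att p0 Q0) e := by
  constructor
  · exact fun h => CleverAux.clever_to_spec h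
  · exact fun h => CleverAux.spec_to_clever h ⟨h4, h43, h5⟩
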